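/- If the preconditioned system moments satisfy s_0 > 0 and s_0 s_{d+1} > Σ_{i=1}^d s_i^2 is violated (i.e., s_0 ≤ 0 or s_0 s_{d+1} ≤ Σ s_i^2), then there is no Maxwellian M(v) = exp(α + β·v − γ|v|^2) with γ > 0 satisfying ∫ φ(v)(|v_1|/Δx) M(v) dv = (s_0, s_1, ..., s_d, s_{d+1})^T. -/

import Mathlib

/-!
The weight `w = |v₁| / Δx · M` is positive off the null hyperplane `v₁ = 0`, so `s₀ = ∫ w > 0`.
Expanding the square gives `∫ |s₀ v - s|² w = s₀ (s₀ s_{d+1} - |s|²)`, and the left side is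
positive because its integrand vanishes only where `v₁ = s₁ / s₀` or `v₁ = 0`. Hence
`s₀ s_{d+1} > |s|²`. Integrability of all these moments comes from the Gaussian decay of `M`
(`γ > 0`), half of which absorbs any polynomial factor.
-/

open MeasureTheory Real

section WeightedMoments

variable {X ι : Type*} [MeasurableSpace X] {μ : Measure X} [Fintype ι]
  {w : X → ℝ} {x : ι → X → ℝ} {m₀ m₂ : ℝ} {m : ι → ℝ}

theorem integral_pos_of_ae_pos [NeZero μ] {f : X → ℝ} (hf : Integrable f μ)
    (hpos : ∀ᵐ a ∂μ, 0 < f a) : 0 < ∫ a, f a ∂μ := by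
  rw [integral_pos_iff_support_of_nonneg_ae (hpos.mono fun _ h => h.le) hf]
  refine pos_iff_ne_zero.2 fun hnull => ?_
  have hfalse : ∀ᵐ _ ∂μ, False := by
    filter_upwards [measure_eq_zero_iff_ae_notMem.1 hnull, hpos] with a ha hfa
    exact ha hfa.ne'
  obtain ⟨_, h⟩ := hfalse.exists
  exact h

theorem integral_sum_sq_sub_mul_eq (hw : Integrable w μ)
    (hx : ∀ i, Integrable (fun a => x i a * w a) μ)
    (hx2 : Integrable (fun a => (∑ i, x i a ^ 2) * w a) μ)
    (h₀ : ∫ a, w a ∂μ = m₀) (hm : ∀ i, ∫ a, x i a * w a ∂μ = m i)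
    (h₂ : ∫ a, (∑ i, x i a ^ 2) * w a ∂μ = m₂) :
    Integrable (fun a => (∑ i, (m₀ * x i a - m i) ^ 2) * w a) μ ∧
      ∫ a, (∑ i, (m₀ * x i a - m i) ^ 2) * w a ∂μ = m₀ * (m₀ * m₂ - ∑ i, m i ^ 2) := by
  have hexpand : (fun a => (∑ i, (m₀ * x i a - m i) ^ 2) * w a) = fun a =>
      m₀ ^ 2 * ((∑ i, x i a ^ 2) * w a) - ∑ i, 2 * m₀ * m i * (x i a * w a)
        + (∑ i, m i ^ 2) * w a := by
    funext a
    simp only [Finset.mul_sum, Finset.sum_mul, ← Finset.sum_sub_distrib, ← Finset.sum_add_distrib]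
    exact Finset.sum_congr rfl fun i _ => by ring
  have hsq : Integrable (fun a => m₀ ^ 2 * ((∑ i, x i a ^ 2) * w a)) μ := hx2.const_mul _
  have hlin : Integrable (fun a => ∑ i, 2 * m₀ * m i * (x i a * w a)) μ :=
    integrable_finsetSum _ fun i _ => (hx i).const_mul _
  have hconst : Integrable (fun a => (∑ i, m i ^ 2) * w a) μ := hw.const_mul _
  rw [hexpand]
  refine ⟨(hsq.sub hlin).add hconst, ?_⟩
  rw [integral_add ?_ hconst, integral_sub hsq hlin, integral_const_mul, integral_const_mul,
    integral_finsetSum _ fun i _ => (hx i).const_mul _]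
  · simp_rw [integral_const_mul, hm, h₀, h₂, mul_assoc, ← Finset.mul_sum, ← sq]
    ring
  · exact hsq.sub hlin

theorem sum_sq_lt_mul_of_ae_pos [NeZero μ] (hw : Integrable w μ)
    (hx : ∀ i, Integrable (fun a => x i a * w a) μ)
    (hx2 : Integrable (fun a => (∑ i, x i a ^ 2) * w a) μ)
    (hpos : ∀ᵐ a ∂μ, 0 < w a) (i₀ : ι) (hnoatom : ∀ c, ∀ᵐ a ∂μ, x i₀ a ≠ c)
    (h₀ : ∫ a, w a ∂μ = m₀) (hm : ∀ i, ∫ a, x i a * w a ∂μ = m i)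
    (h₂ : ∫ a, (∑ i, x i a ^ 2) * w a ∂μ = m₂) :
    0 < m₀ ∧ ∑ i, m i ^ 2 < m₀ * m₂ := by
  have hm₀ : 0 < m₀ := h₀ ▸ integral_pos_of_ae_pos hw hpos
  obtain ⟨hint, heq⟩ := integral_sum_sq_sub_mul_eq hw hx hx2 h₀ hm h₂
  have hquad := integral_pos_of_ae_pos hint (by
    filter_upwards [hpos, hnoatom (m i₀ / m₀)] with a hwa hxa
    have hne : m₀ * x i₀ a - m i₀ ≠ 0 := fun h => hxa (by field_simp; linarith)
    exact mul_pos (Finset.sum_pos' (fun i _ => sq_nonneg _)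
      ⟨i₀, Finset.mem_univ _, pow_two_pos_of_ne_zero hne⟩) hwa)
  rw [heq] at hquad
  exact ⟨hm₀, sub_pos.1 (pos_of_mul_pos_right hquad hm₀.le)⟩

end WeightedMoments

theorem pow_le_factorial_div_pow_mul_exp {c t : ℝ} (hc : 0 < c) (ht : 0 ≤ t) (k : ℕ) :
    t ^ k ≤ k.factorial / c ^ k * exp (c * t) := by
  have h := pow_div_factorial_le_exp _ (mul_nonneg hc.le ht) k
  rw [div_le_iff₀ (by positivity), mul_pow] at h
  rw [div_mul_eq_mul_div, le_div_iff₀ (by positivity)]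
  linarith

section Maxwellian

variable {ι : Type*} [Fintype ι]

theorem abs_apply_le_one_add_sq_norm (v : EuclideanSpace ℝ ι) (i : ι) : |v i| ≤ 1 + ‖v‖ ^ 2 := by
  have h := PiLp.norm_apply_le v i
  rw [Real.norm_eq_abs] at h
  nlinarith [sq_nonneg (‖v‖ - 1)]

theorem ae_apply_ne (i : ι) (c : ℝ) : ∀ᵐ v : EuclideanSpace ℝ ι, v i ≠ c :=
  (PiLp.volume_preserving_ofLp ι).quasiMeasurePreserving.ae (Measure.ae_eval_ne _ i c)

noncomputable def maxwellian (α : ℝ) (β : EuclideanSpace ℝ ι) (γ : ℝ) (v : EuclideanSpace ℝ ι) :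
    ℝ :=
  exp (α + (∑ i, β i * v i) - γ * ‖v‖ ^ 2)

theorem maxwellian_pos (α : ℝ) (β : EuclideanSpace ℝ ι) (γ : ℝ) (v : EuclideanSpace ℝ ι) :
    0 < maxwellian α β γ v :=
  exp_pos _

theorem integrable_maxwellian (α : ℝ) (β : EuclideanSpace ℝ ι) {γ : ℝ} (hγ : 0 < γ) :
    Integrable (maxwellian α β γ) := by
  have h := GaussianFourier.integrable_cexp_neg_mul_sq_norm_add_of_euclideanSpace
    (b := γ) (by simpa using hγ) 1 β
  refine (h.norm.const_mul (exp α)).congr (ae_of_all _ fun v => ?_)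
  have hinner : inner ℝ β v = ∑ i, β i * v i := by
    simp [PiLp.inner_apply, mul_comm]
  have harg : -(γ : ℂ) * (‖v‖ : ℂ) ^ 2 + 1 * (inner ℝ β v : ℂ)
      = ((-γ * ‖v‖ ^ 2 + ∑ i, β i * v i : ℝ) : ℂ) := by
    rw [hinner]
    push_cast
    ring
  dsimp only
  rw [harg, Complex.norm_exp_ofReal, maxwellian, ← exp_add]
  ring_nf

theorem one_add_sq_norm_pow_mul_maxwellian_le (k : ℕ) (α : ℝ) (β : EuclideanSpace ℝ ι) {γ : ℝ}
    (hγ : 0 < γ) (v : EuclideanSpace ℝ ι) :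
    (1 + ‖v‖ ^ 2) ^ k * maxwellian α β γ v
      ≤ k.factorial / (γ / 2) ^ k * exp (γ / 2) * maxwellian α β (γ / 2) v := by
  unfold maxwellian
  calc (1 + ‖v‖ ^ 2) ^ k * exp (α + (∑ i, β i * v i) - γ * ‖v‖ ^ 2)
      ≤ k.factorial / (γ / 2) ^ k * exp (γ / 2 * (1 + ‖v‖ ^ 2))
          * exp (α + (∑ i, β i * v i) - γ * ‖v‖ ^ 2) :=
        mul_le_mul_of_nonneg_right
          (pow_le_factorial_div_pow_mul_exp (half_pos hγ) (by positivity) k) (exp_pos _).le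
    _ = _ := by
        rw [mul_assoc, ← exp_add, mul_assoc, ← exp_add]
        ring_nf

theorem integrable_mul_maxwellian {P : EuclideanSpace ℝ ι → ℝ} (hP : AEStronglyMeasurable P)
    {C : ℝ} {k : ℕ} (hPb : ∀ v, |P v| ≤ C * (1 + ‖v‖ ^ 2) ^ k)
    (α : ℝ) (β : EuclideanSpace ℝ ι) {γ : ℝ} (hγ : 0 < γ) :
    Integrable (fun v => P v * maxwellian α β γ v) := by
  have hC : 0 ≤ C := by simpa using (abs_nonneg _).trans (hPb 0)
  refine ((integrable_maxwellian α β (half_pos hγ)).const_mul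
    (C * (k.factorial / (γ / 2) ^ k) * exp (γ / 2))).mono'
    (hP.mul (integrable_maxwellian α β hγ).aestronglyMeasurable) (ae_of_all _ fun v => ?_)
  rw [norm_mul, Real.norm_eq_abs, Real.norm_eq_abs, abs_of_pos (maxwellian_pos α β γ v)]
  calc |P v| * maxwellian α β γ v ≤ C * (1 + ‖v‖ ^ 2) ^ k * maxwellian α β γ v :=
        mul_le_mul_of_nonneg_right (hPb v) (maxwellian_pos α β γ v).le
    _ ≤ C * (k.factorial / (γ / 2) ^ k * exp (γ / 2) * maxwellian α β (γ / 2) v) := by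
        rw [mul_assoc]
        exact mul_le_mul_of_nonneg_left (one_add_sq_norm_pow_mul_maxwellian_le k α β hγ v) hC
    _ = _ := by ring

theorem integrable_moments_mul_maxwellian {q : EuclideanSpace ℝ ι → ℝ}
    (hq : AEStronglyMeasurable q) {C : ℝ} (hqb : ∀ v, |q v| ≤ C * (1 + ‖v‖ ^ 2))
    (α : ℝ) (β : EuclideanSpace ℝ ι) {γ : ℝ} (hγ : 0 < γ) :
    Integrable (fun v => q v * maxwellian α β γ v) ∧
      (∀ i, Integrable (fun v => v i * (q v * maxwellian α β γ v))) ∧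
      Integrable (fun v => (∑ i, v i ^ 2) * (q v * maxwellian α β γ v)) := by
  refine ⟨integrable_mul_maxwellian (k := 1) hq (by simpa using hqb) α β hγ, fun i => ?_, ?_⟩
  · simpa only [mul_assoc] using integrable_mul_maxwellian (P := fun v => v i * q v) (k := 2)
      (by fun_prop) (fun v => by
        rw [abs_mul]
        exact (mul_le_mul (abs_apply_le_one_add_sq_norm v i) (hqb v) (abs_nonneg _)
          (by positivity)).trans_eq (by ring)) α β hγ
  · simpa only [mul_assoc] using integrable_mul_maxwellian (P := fun v => (∑ i, v i ^ 2) * q v)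
      (k := 2) (by fun_prop) (fun v => by
        rw [abs_mul, ← EuclideanSpace.real_norm_sq_eq, abs_sq]
        exact (mul_le_mul (le_add_of_nonneg_left zero_le_one) (hqb v) (abs_nonneg _)
          (by positivity)).trans_eq (by ring)) α β hγ

end Maxwellian

theorem no_maxwellian_if_condition_violated
    (d : ℕ) (hd : 0 < d) (Δx : ℝ) (hΔx : 0 < Δx)
    (s₀ sd1 : ℝ) (s : Fin d → ℝ)
    (hviol : s₀ ≤ 0 ∨ s₀ * sd1 ≤ ∑ i, s i ^ 2) :
    ¬ ∃ (α : ℝ) (β : EuclideanSpace ℝ (Fin d)) (γ : ℝ), 0 < γ ∧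
      (∫ v : EuclideanSpace ℝ (Fin d),
          (|v ⟨0, hd⟩| / Δx) * Real.exp (α + (∑ i, β i * v i) - γ * ‖v‖ ^ 2)) = s₀ ∧
      (∀ i : Fin d, (∫ v : EuclideanSpace ℝ (Fin d),
          v i * (|v ⟨0, hd⟩| / Δx) * Real.exp (α + (∑ i, β i * v i) - γ * ‖v‖ ^ 2)) = s i) ∧
      (∫ v : EuclideanSpace ℝ (Fin d),
          ‖v‖ ^ 2 * (|v ⟨0, hd⟩| / Δx) * Real.exp (α + (∑ i, β i * v i) - γ * ‖v‖ ^ 2)) = sd1 := by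
  rintro ⟨α, β, γ, hγ, h₀, h₁, h₂⟩
  set i₀ : Fin d := ⟨0, hd⟩
  set w : EuclideanSpace ℝ (Fin d) → ℝ := fun v => |v i₀| / Δx * maxwellian α β γ v
  have hq : ∀ v : EuclideanSpace ℝ (Fin d), |(|v i₀| / Δx)| ≤ Δx⁻¹ * (1 + ‖v‖ ^ 2) := fun v => by
    rw [abs_div, abs_abs, abs_of_pos hΔx, div_eq_inv_mul]
    exact mul_le_mul_of_nonneg_left (abs_apply_le_one_add_sq_norm v i₀) (by positivity)
  obtain ⟨hw, hx, hx2⟩ := integrable_moments_mul_maxwellian (by fun_prop) hq α β hγ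
  have hpos : ∀ᵐ v : EuclideanSpace ℝ (Fin d), 0 < w v := by
    filter_upwards [ae_apply_ne i₀ 0] with v hv
    exact mul_pos (div_pos (abs_pos.2 hv) hΔx) (maxwellian_pos α β γ v)
  have hm₀ : ∫ v : EuclideanSpace ℝ (Fin d), w v = s₀ := h₀
  have hm : ∀ i, ∫ v : EuclideanSpace ℝ (Fin d), v i * w v = s i := fun i =>
    (integral_congr_ae (ae_of_all _ fun v => (mul_assoc _ _ _).symm)).trans (h₁ i)
  have hm₂ : ∫ v : EuclideanSpace ℝ (Fin d), (∑ i, v i ^ 2) * w v = sd1 := by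
    refine (integral_congr_ae (ae_of_all _ fun v => ?_)).trans h₂
    rw [← EuclideanSpace.real_norm_sq_eq, mul_assoc]
    rfl
  obtain ⟨hs₀, hs⟩ := sum_sq_lt_mul_of_ae_pos (x := fun i (v : EuclideanSpace ℝ (Fin d)) => v i)
    hw hx hx2 hpos i₀ (ae_apply_ne i₀) hm₀ hm hm₂
  rcases hviol with h | h <;> linarith
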